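/- arXiv:1603.08460 — 3 statements merged into one kernel-verified Lean document; each statement's English description precedes it below -/
import Mathlib

section
/- Let X be uniformly distributed on the half-ball B_u(x,r) = B(x,r) ∩ {z ∈ ℝ^d : ⟨z − x, u⟩ ≥ 0}, where u is a unit vector. Then E[⟨X − x, u⟩/r] = Γ((d+2)/2)/(√π · Γ((d+3)/2)). -/
/-!
Translate `x` to the origin and move `u` to the first basis vector `e₀` by the reflection
exchanging them. In the coordinates `z = (t, y) ∈ ℝ × ℝ^(d-1)` the half-ball is
`{t² + ‖y‖² ≤ r², t ≥ 0}`, whose slice at height `t ∈ [0, r]` is a `(d-1)`-ball of radius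
`√(r² - t²)`. By Fubini,
`∫ t = ω_{d-1} ∫₀ʳ t (r² - t²)^((d-1)/2) dt = ω_{d-1} r^(d+1) / (d+1)`,
where `ω_k = π^(k/2) / Γ(k/2 + 1)` is the volume of the unit `k`-ball. The point reflection
`z ↦ -z` exchanges the half-ball with the opposite one, and the two meet in a null hyperplane,
so the half-ball has volume `ω_d r^d / 2`. Dividing, and using
`Γ((d+3)/2) = (d+1)/2 · Γ((d+1)/2)`, gives the formula.
-/

open MeasureTheory Metric Real
open scoped ENNReal RealInnerProductSpace

section HalfBall

variable {E : Type*} [NormedAddCommGroup E] [InnerProductSpace ℝ E]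

def halfBall (x u : E) (r : ℝ) : Set E := closedBall x r ∩ {z | 0 ≤ ⟪z - x, u⟫}

theorem halfBall_eq_preimage_sub (x u : E) (r : ℝ) :
    halfBall x u r = (· - x) ⁻¹' halfBall 0 u r := by
  ext z
  simp [halfBall, dist_eq_norm]

theorem LinearIsometryEquiv.preimage_halfBall (R : E ≃ₗᵢ[ℝ] E) (u : E) (r : ℝ) :
    R ⁻¹' halfBall 0 (R u) r = halfBall 0 u r := by
  ext z
  simp [halfBall, R.inner_map_map]

theorem isCompact_halfBall [ProperSpace E] (x u : E) (r : ℝ) : IsCompact (halfBall x u r) :=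
  (isCompact_closedBall x r).inter_right <|
    isClosed_le continuous_const ((continuous_id.sub continuous_const).inner continuous_const)

theorem halfBall_union_halfBall_neg (x u : E) (r : ℝ) :
    halfBall x u r ∪ halfBall x (-u) r = closedBall x r := by
  ext z
  simp only [halfBall, ← Set.inter_union_distrib_left, Set.mem_inter_iff, Set.mem_union,
    Set.mem_ofPred_eq, inner_neg_right, neg_nonneg, and_iff_left_iff_imp]
  exact fun _ ↦ le_total _ _

theorem halfBall_inter_halfBall_neg_subset (u : E) (r : ℝ) :
    halfBall 0 u r ∩ halfBall 0 (-u) r ⊆ (ℝ ∙ u)ᗮ := by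
  rintro z ⟨⟨-, hz⟩, -, hz'⟩
  simp only [sub_zero, Set.mem_ofPred_eq, inner_neg_right, neg_nonneg] at hz hz'
  rw [SetLike.mem_coe, Submodule.mem_orthogonal_singleton_iff_inner_left]
  exact le_antisymm hz' hz

section Measure

variable [FiniteDimensional ℝ E] [MeasurableSpace E] [BorelSpace E]

theorem measurableSet_halfBall (x u : E) (r : ℝ) : MeasurableSet (halfBall x u r) :=
  (isCompact_halfBall x u r).isClosed.measurableSet

theorem volume_halfBall_center (x u : E) (r : ℝ) :
    volume (halfBall x u r) = volume (halfBall 0 u r) := by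
  rw [halfBall_eq_preimage_sub]
  exact (measurePreserving_sub_right volume x).measure_preimage
    (measurableSet_halfBall 0 u r).nullMeasurableSet

theorem LinearIsometryEquiv.volume_halfBall (R : E ≃ₗᵢ[ℝ] E) (u : E) (r : ℝ) :
    volume (halfBall 0 (R u) r) = volume (halfBall 0 u r) := by
  rw [← R.preimage_halfBall u r]
  exact (R.measurePreserving.measure_preimage
    (measurableSet_halfBall 0 (R u) r).nullMeasurableSet).symm

theorem volume_halfBall {u : E} (hu : u ≠ 0) (x : E) (r : ℝ) :
    volume (halfBall x u r) = volume (closedBall x r) / 2 := by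
  have hnull : volume (halfBall 0 u r ∩ halfBall 0 (-u) r) = 0 := by
    refine measure_mono_null (halfBall_inter_halfBall_neg_subset u r)
      (Measure.addHaar_submodule _ _ ?_)
    rwa [Ne, Submodule.orthogonal_eq_top_iff, Submodule.span_singleton_eq_bot]
  have hsymm : volume (halfBall 0 (-u) r) = volume (halfBall 0 u r) :=
    (LinearIsometryEquiv.neg ℝ).volume_halfBall u r
  have h := measure_union_add_inter (μ := volume) (halfBall 0 u r)
    (measurableSet_halfBall 0 (-u) r)
  rw [halfBall_union_halfBall_neg, hnull, add_zero, hsymm] at h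
  rw [volume_halfBall_center, Measure.addHaar_closedBall_center, h,
    ENNReal.add_div, ENNReal.add_halves]

theorem setIntegral_inner_halfBall_center (x u : E) (r : ℝ) :
    ∫ z in halfBall x u r, ⟪z - x, u⟫ = ∫ z in halfBall 0 u r, ⟪z, u⟫ := by
  rw [halfBall_eq_preimage_sub]
  exact (measurePreserving_sub_right volume x).setIntegral_preimage_emb
    (measurableEmbedding_subRight x) (⟪·, u⟫) _

theorem LinearIsometryEquiv.setIntegral_inner_halfBall (R : E ≃ₗᵢ[ℝ] E) (u : E) (r : ℝ) :
    ∫ z in halfBall 0 (R u) r, ⟪z, R u⟫ = ∫ z in halfBall 0 u r, ⟪z, u⟫ := by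
  rw [← R.preimage_halfBall u r]
  simp_rw [← R.inner_map_map _ u]
  exact (R.measurePreserving.setIntegral_preimage_emb
    R.toHomeomorph.measurableEmbedding (⟪·, R u⟫) _).symm

theorem setIntegral_inner_halfBall_eq_of_norm_eq {u v : E} (h : ‖u‖ = ‖v‖) (r : ℝ) :
    ∫ z in halfBall 0 u r, ⟪z, u⟫ = ∫ z in halfBall 0 v r, ⟪z, v⟫ := by
  rw [← Submodule.reflection_sub h, LinearIsometryEquiv.setIntegral_inner_halfBall]

end Measure

end HalfBall

theorem setIntegral_comp_fst_eq_integral_measureReal_slice_smul {α β F : Type*}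
    [MeasurableSpace α] [MeasurableSpace β] [NormedAddCommGroup F] [NormedSpace ℝ F]
    [CompleteSpace F] {μ : Measure α} {ν : Measure β} [SFinite μ] [SFinite ν] {S : Set (α × β)}
    (hS : MeasurableSet S) {f : α → F} (hf : IntegrableOn (fun p ↦ f p.1) S (μ.prod ν)) :
    ∫ p in S, f p.1 ∂μ.prod ν = ∫ a, ν.real (Prod.mk a ⁻¹' S) • f a ∂μ := by
  rw [← integral_indicator hS, integral_prod _ (hf.integrable_indicator hS)]
  refine integral_congr_ae (.of_forall fun a ↦ ?_)
  change ∫ b, (Prod.mk a ⁻¹' S).indicator (fun _ ↦ f a) b ∂ν = _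
  rw [integral_indicator_const _ (measurable_prodMk_left hS)]

theorem integral_mul_rpow_sq_sub_sq {p : ℝ} (hp : 0 ≤ p) (r : ℝ) :
    ∫ t in (0 : ℝ)..r, t * (r ^ 2 - t ^ 2) ^ p = (r ^ 2) ^ (p + 1) / (2 * (p + 1)) := by
  have hderiv : ∀ t ∈ Set.uIcc 0 r,
      HasDerivAt (fun t ↦ -(r ^ 2 - t ^ 2) ^ (p + 1) / (2 * (p + 1)))
        (t * (r ^ 2 - t ^ 2) ^ p) t := by
    intro t _
    have h := (((hasDerivAt_pow 2 t).const_sub (r ^ 2)).rpow_const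
      (p := p + 1) (Or.inr (by linarith))).neg.div_const (2 * (p + 1))
    refine h.congr_deriv ?_
    rw [add_sub_cancel_right]
    field_simp
    ring
  have hcont : Continuous fun t : ℝ ↦ t * (r ^ 2 - t ^ 2) ^ p := by
    fun_prop (disch := exact hp)
  rw [intervalIntegral.integral_eq_sub_of_hasDerivAt hderiv (hcont.intervalIntegrable _ _)]
  simp [zero_rpow (by linarith : p + 1 ≠ 0)]
  ring

theorem volume_setOf_sum_sq_le (ι : Type*) [Fintype ι] {s : ℝ} (hs : 0 ≤ s) :
    volume {y : ι → ℝ | ∑ j, y j ^ 2 ≤ s} = ENNReal.ofReal (s ^ ((Fintype.card ι : ℝ) / 2) *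
      (√π ^ Fintype.card ι / Gamma (Fintype.card ι / 2 + 1))) := by
  cases isEmpty_or_nonempty ι
  · simp [hs, volume_pi]
  have hball : {y : ι → ℝ | ∑ j, y j ^ 2 ≤ s} =
      WithLp.toLp 2 ⁻¹' closedBall (0 : EuclideanSpace ℝ ι) √s := by
    ext y
    rw [Set.mem_preimage, mem_closedBall_zero_iff, EuclideanSpace.norm_eq, sqrt_le_sqrt_iff hs]
    simp [sq_abs]
  rw [hball, (PiLp.volume_preserving_toLp ι).measure_preimage
    measurableSet_closedBall.nullMeasurableSet, EuclideanSpace.volume_closedBall,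
    ← ENNReal.ofReal_pow (sqrt_nonneg s), ← ENNReal.ofReal_mul (by positivity),
    sqrt_eq_rpow, ← rpow_natCast, ← rpow_mul hs, one_div_mul_eq_div]

def halfBallProd (ι : Type*) [Fintype ι] (r : ℝ) : Set (ℝ × (ι → ℝ)) :=
  {p | p.1 ^ 2 + ∑ j, p.2 j ^ 2 ≤ r ^ 2 ∧ 0 ≤ p.1}

theorem isClosed_halfBallProd (ι : Type*) [Fintype ι] (r : ℝ) : IsClosed (halfBallProd ι r) :=
  (isClosed_le (f := fun p : ℝ × (ι → ℝ) ↦ p.1 ^ 2 + ∑ j, p.2 j ^ 2) (by fun_prop)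
    continuous_const).inter (isClosed_le continuous_const continuous_fst)

section HalfBallProd

variable {ι : Type*} [Fintype ι]

theorem preimage_prodMk_halfBallProd {t : ℝ} (ht : 0 ≤ t) (r : ℝ) :
    Prod.mk t ⁻¹' halfBallProd ι r = {y | ∑ j, y j ^ 2 ≤ r ^ 2 - t ^ 2} := by
  ext y
  simp [halfBallProd, ht, le_sub_iff_add_le']

theorem preimage_prodMk_halfBallProd_eq_empty {r t : ℝ} (hr : 0 ≤ r) (ht : t ∉ Set.Icc 0 r) :
    Prod.mk t ⁻¹' halfBallProd ι r = ∅ := by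
  refine Set.eq_empty_of_forall_notMem fun y ⟨hy, ht0⟩ ↦ ht ⟨ht0, ?_⟩
  have : 0 ≤ ∑ j, y j ^ 2 := by positivity
  nlinarith

theorem integral_measureReal_preimage_prodMk_halfBallProd_mul {r : ℝ} (hr : 0 ≤ r) :
    ∫ t, volume.real (Prod.mk t ⁻¹' halfBallProd ι r) * t =
      √π ^ Fintype.card ι / Gamma (Fintype.card ι / 2 + 1) *
        (r ^ (Fintype.card ι + 2) / (Fintype.card ι + 2)) := by
  set k := Fintype.card ι
  have hslice : ∀ t ∈ Set.uIcc 0 r, volume.real (Prod.mk t ⁻¹' halfBallProd ι r) * t =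
      √π ^ k / Gamma (k / 2 + 1) * (t * (r ^ 2 - t ^ 2) ^ ((k : ℝ) / 2)) := by
    intro t ht
    rw [Set.uIcc_of_le hr] at ht
    have hs : 0 ≤ r ^ 2 - t ^ 2 := by nlinarith [ht.1, ht.2]
    rw [preimage_prodMk_halfBallProd ht.1, measureReal_def, volume_setOf_sum_sq_le ι hs,
      ENNReal.toReal_ofReal (by positivity)]
    ring
  have hvanish :
      ∀ t ∉ Set.Ioc 0 r, volume.real (Prod.mk t ⁻¹' halfBallProd ι r) * t = 0 := by
    intro t ht
    rcases eq_or_ne t 0 with rfl | ht0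
    · exact mul_zero _
    · rw [preimage_prodMk_halfBallProd_eq_empty hr fun h ↦ ht ⟨h.1.lt_of_ne' ht0, h.2⟩,
        measureReal_empty, zero_mul]
  have hpow : (r ^ 2) ^ ((k : ℝ) / 2 + 1) = r ^ (k + 2) := by
    rw [← rpow_two, ← rpow_mul hr, ← rpow_natCast]
    push_cast
    ring_nf
  rw [← setIntegral_eq_integral_of_forall_compl_eq_zero hvanish,
    ← intervalIntegral.integral_of_le hr, intervalIntegral.integral_congr hslice,
    intervalIntegral.integral_const_mul, integral_mul_rpow_sq_sub_sq (by positivity), hpow]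
  field_simp

end HalfBallProd

namespace EuclideanSpace

def measurableEquivFinSucc (n : ℕ) : EuclideanSpace ℝ (Fin (n + 1)) ≃ᵐ ℝ × (Fin n → ℝ) :=
  (MeasurableEquiv.toLp 2 (Fin (n + 1) → ℝ)).symm.trans
    (MeasurableEquiv.piFinSuccAbove (fun _ ↦ ℝ) 0)

theorem measurePreserving_measurableEquivFinSucc (n : ℕ) :
    MeasurePreserving (measurableEquivFinSucc n) :=
  (volume_preserving_piFinSuccAbove (fun _ : Fin (n + 1) ↦ ℝ) 0).comp
    (volume_preserving_symm_measurableEquiv_toLp _)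

theorem inner_single_zero_eq_fst {n : ℕ} (z : EuclideanSpace ℝ (Fin (n + 1))) :
    ⟪z, single 0 1⟫ = (measurableEquivFinSucc n z).1 := by
  simp [inner_single_right, measurableEquivFinSucc]

theorem halfBall_single_zero_eq_preimage {n : ℕ} {r : ℝ} (hr : 0 ≤ r) :
    halfBall 0 (single 0 1) r = measurableEquivFinSucc n ⁻¹' halfBallProd (Fin n) r := by
  ext z
  have hnorm := real_norm_sq_eq z
  rw [Fin.sum_univ_succ] at hnorm
  simp only [halfBall, halfBallProd, Set.mem_inter_iff, mem_closedBall_zero_iff, sub_zero,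
    Set.mem_ofPred_eq, Set.mem_preimage, inner_single_zero_eq_fst,
    ← pow_le_pow_iff_left₀ (norm_nonneg z) hr two_ne_zero, hnorm]
  rfl

theorem setIntegral_inner_halfBall_single_zero (n : ℕ) {r : ℝ} (hr : 0 ≤ r) :
    ∫ z in halfBall 0 (single 0 1 : EuclideanSpace ℝ (Fin (n + 1))) r, ⟪z, single 0 1⟫ =
      √π ^ n / Gamma (n / 2 + 1) * (r ^ (n + 2) / (n + 2)) := by
  set e := measurableEquivFinSucc n
  have he := measurePreserving_measurableEquivFinSucc n
  have hint : IntegrableOn Prod.fst (halfBallProd (Fin n) r) := by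
    rw [← he.integrableOn_comp_preimage e.measurableEmbedding,
      ← halfBall_single_zero_eq_preimage hr,
      show Prod.fst ∘ e = (⟪·, single 0 1⟫) from funext fun z ↦ (inner_single_zero_eq_fst z).symm]
    exact (continuous_id.inner continuous_const).continuousOn.integrableOn_compact
      (isCompact_halfBall _ _ _)
  calc _ = ∫ p in halfBallProd (Fin n) r, p.1 := by
        rw [halfBall_single_zero_eq_preimage hr]
        simp_rw [inner_single_zero_eq_fst]
        exact he.setIntegral_preimage_emb e.measurableEmbedding Prod.fst _
    _ = ∫ t, volume.real (Prod.mk t ⁻¹' halfBallProd (Fin n) r) • t := by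
        rw [Measure.volume_eq_prod]
        exact setIntegral_comp_fst_eq_integral_measureReal_slice_smul
          (isClosed_halfBallProd _ r).measurableSet (f := id) hint
    _ = _ := by
        simpa using integral_measureReal_preimage_prodMk_halfBallProd_mul (ι := Fin n) hr

theorem setIntegral_inner_sub_halfBall {n : ℕ} (x : EuclideanSpace ℝ (Fin (n + 1)))
    {u : EuclideanSpace ℝ (Fin (n + 1))} (hu : ‖u‖ = 1) {r : ℝ} (hr : 0 ≤ r) :
    ∫ z in halfBall x u r, ⟪z - x, u⟫ =
      √π ^ n / Gamma (n / 2 + 1) * (r ^ (n + 2) / (n + 2)) := by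
  rw [setIntegral_inner_halfBall_center, setIntegral_inner_halfBall_eq_of_norm_eq
    (v := single 0 1) (by simp [hu]),
    setIntegral_inner_halfBall_single_zero n hr]

end EuclideanSpace

theorem uniform_half_ball_mean_general (d : ℕ)
    (x u : EuclideanSpace ℝ (Fin d)) (hu : ‖u‖ = 1) (r : ℝ) (hr : 0 < r)
    (H : Set (EuclideanSpace ℝ (Fin d)))
    (hH : H = closedBall x r ∩ {z | 0 ≤ ⟪z - x, u⟫})
    (μ : Measure (EuclideanSpace ℝ (Fin d)))
    (hμ : μ = (volume H)⁻¹ • volume.restrict H) :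
    ∫ z, ⟪z - x, u⟫ / r ∂μ =
      Real.Gamma ((d + 2) / 2) / (Real.sqrt Real.pi * Real.Gamma ((d + 3) / 2)) := by
  have hu0 : u ≠ 0 := by
    rintro rfl
    simp at hu
  obtain ⟨n, rfl⟩ : ∃ n, d = n + 1 := Nat.exists_eq_succ_of_ne_zero <| by
    rintro rfl
    exact hu0 (Subsingleton.elim u 0)
  change H = halfBall x u r at hH
  subst hH hμ
  rw [integral_smul_measure, integral_div,
    EuclideanSpace.setIntegral_inner_sub_halfBall x hu hr.le, volume_halfBall hu0,
    EuclideanSpace.volume_closedBall, Fintype.card_fin, ENNReal.toReal_inv, ENNReal.toReal_div,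
    ENNReal.toReal_mul, ENNReal.toReal_pow, ENNReal.toReal_ofReal hr.le,
    ENNReal.toReal_ofReal (by positivity), ENNReal.toReal_ofNat, smul_eq_mul]
  have hΓ : Gamma ((n + 1 + 3) / 2) = (n / 2 + 1) * Gamma (n / 2 + 1) := by
    rw [← Gamma_add_one (by positivity)]
    ring_nf
  have hΓ₀ : 0 < Gamma (n / 2 + 1) := Gamma_pos_of_pos (by positivity)
  have hΓ₁ : 0 < Gamma ((n + 1) / 2 + 1) := Gamma_pos_of_pos (by positivity)
  push_cast
  rw [hΓ, show ((n : ℝ) + 1 + 2) / 2 = (n + 1) / 2 + 1 by ring]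
  field_simp
  ring

/-- For `X` uniform on the half-ball `B_u(x,r) = B(x,r) ∩ {z : ⟨z-x,u⟩ ≥ 0}` with `u` a unit
vector, `E[⟨X-x,u⟩/r] = Γ((d+2)/2)/(√π · Γ((d+3)/2))`. -/
theorem uniform_half_ball_mean (d : ℕ) (hd : 1 ≤ d)
    (x u : EuclideanSpace ℝ (Fin d)) (hu : ‖u‖ = 1) (r : ℝ) (hr : 0 < r)
    (H : Set (EuclideanSpace ℝ (Fin d)))
    (hH : H = closedBall x r ∩ {z | 0 ≤ ⟪z - x, u⟫})
    (μ : Measure (EuclideanSpace ℝ (Fin d)))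
    (hμ : μ = (volume H)⁻¹ • volume.restrict H) :
    ∫ z, ⟪z - x, u⟫ / r ∂μ =
      Real.Gamma ((d + 2) / 2) / (Real.sqrt Real.pi * Real.Gamma ((d + 3) / 2)) :=
  uniform_half_ball_mean_general d x u hu r hr H hH μ hμ
end

section
/- Let T_n be a sequence of random variables with T_n ∼ Binomial(k'_n, q_n), where q_n·√(k'_n)·ln(n) → 0 and k'_n/(ln n)⁴ → ∞. Then for every λ > 0, the series ∑_n n·P(ln(n)·T_n/√(k'_n) > λ) converges. -/
/-!
For `T ∼ Bin(k, q)` every value `t` has probability at most `C(k, t) qᵗ ≤ (e k q / t)ᵗ`. On the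
event `T > μ := λ √k / ln n` this base is at most `e k q / μ = e q √k ln n / λ → 0`, so for large
`n` it is below `e^{-c}` with `c = 7 / λ`, and a union bound over the `k + 1` values of `T` gives
`P(T > μ) ≤ (k + 1) e^{-7 √k / ln n}`. Since `k ≥ (ln n)⁴`, both `ln n` and `ln (k + 1) / 4` are at
most `√k / ln n`, hence `n P(T > μ) ≤ n⁻²`.
-/

set_option linter.deprecated false

open Filter Real
open scoped ENNReal NNReal Topology

theorem Nat.choose_mul_pow_le (k t : ℕ) {q : ℝ} (hq : 0 ≤ q) :
    (k.choose t : ℝ) * q ^ t ≤ (exp 1 * k * q / t) ^ t := by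
  rcases t.eq_zero_or_pos with rfl | ht
  · simp
  calc (k.choose t : ℝ) * q ^ t ≤ (k : ℝ) ^ t / t.factorial * q ^ t := by
        gcongr; exact Nat.choose_le_pow_div t k
    _ = (k * q / t) ^ t * ((t : ℝ) ^ t / t.factorial) := by
        rw [div_pow, mul_pow]; field_simp
    _ ≤ (k * q / t) ^ t * exp t := by
        gcongr; exact Real.pow_div_factorial_le_exp _ t.cast_nonneg t
    _ = (exp 1 * k * q / t) ^ t := by
        rw [← exp_one_pow]; ring

theorem Nat.choose_mul_pow_le_exp {k t : ℕ} {q μ c : ℝ} (hq : 0 ≤ q) (hμ : 0 < μ) (hc : 0 ≤ c)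
    (ht : μ ≤ t) (hratio : exp 1 * k * q ≤ exp (-c) * μ) :
    (k.choose t : ℝ) * q ^ t ≤ exp (-(c * μ)) := by
  have ht0 : (0 : ℝ) < t := hμ.trans_le ht
  have hbase : exp 1 * k * q / t ≤ exp (-c) := by
    rw [div_le_iff₀ ht0]
    exact hratio.trans (by gcongr)
  calc (k.choose t : ℝ) * q ^ t ≤ (exp 1 * k * q / t) ^ t := k.choose_mul_pow_le t hq
    _ ≤ exp (-c) ^ t := by gcongr
    _ = exp (-(c * t)) := by rw [← exp_nat_mul]; ring_nf
    _ ≤ exp (-(c * μ)) := exp_le_exp.mpr (by nlinarith)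

theorem PMF.binomial_apply_le (p : ℝ≥0) (hp : p ≤ 1) (k : ℕ) (t : Fin (k + 1)) :
    PMF.binomial p hp k t ≤ k.choose t * (p : ℝ≥0∞) ^ (t : ℕ) := by
  rw [PMF.binomial_apply, mul_comm]
  gcongr
  exact mul_le_of_le_one_right zero_le (pow_le_one₀ zero_le tsub_le_self)

theorem PMF.toMeasure_le_card_mul {α : Type*} [Fintype α] [MeasurableSpace α]
    [MeasurableSingletonClass α] (p : PMF α) {s : Set α} {M : ℝ≥0∞} (h : ∀ a ∈ s, p a ≤ M) :
    p.toMeasure s ≤ Fintype.card α * M := by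
  rw [PMF.toMeasure_apply_fintype, ← nsmul_eq_mul]
  refine Finset.sum_le_card_nsmul _ _ _ fun a _ => ?_
  by_cases ha : a ∈ s
  · simpa [ha] using h a ha
  · simp [ha]

theorem PMF.binomial_tail_le (p : ℝ≥0) (hp : p ≤ 1) (k : ℕ) {s : Set (Fin (k + 1))} {μ c : ℝ}
    (hμ : 0 < μ) (hc : 0 ≤ c) (hs : ∀ t ∈ s, μ < t) (hratio : exp 1 * k * p ≤ exp (-c) * μ) :
    ((PMF.binomial p hp k).toMeasure s).toReal ≤ (k + 1) * exp (-(c * μ)) := by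
  have hpoint : ∀ t ∈ s, PMF.binomial p hp k t ≤ ENNReal.ofReal (exp (-(c * μ))) := fun t ht =>
    (PMF.binomial_apply_le p hp k t).trans <| by
      rw [← ENNReal.ofReal_coe_nnreal, ← ENNReal.ofReal_natCast, ← ENNReal.ofReal_pow p.coe_nonneg,
        ← ENNReal.ofReal_mul (by positivity)]
      exact ENNReal.ofReal_le_ofReal <|
        Nat.choose_mul_pow_le_exp p.coe_nonneg hμ hc (hs t ht).le hratio
  have := ENNReal.toReal_mono (by finiteness) ((PMF.binomial p hp k).toMeasure_le_card_mul hpoint)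
  simpa [(exp_pos _).le, ENNReal.toReal_add] using this

theorem Real.le_sqrt_div_of_pow_four_le {K L : ℝ} (hL : 0 < L) (h : L ^ 4 ≤ K) : L ≤ √K / L := by
  have hL2 : L ^ 2 ≤ √K :=
    (le_sqrt (by positivity) ((pow_pos hL 4).le.trans h)).mpr (by rwa [← pow_mul])
  rw [le_div_iff₀ hL]
  nlinarith

theorem Real.log_add_one_le_of_pow_four_le {K L : ℝ} (hK : 1 ≤ K) (hL : 0 < L) (h : L ^ 4 ≤ K) :
    log (K + 1) ≤ 4 * (√K / L) := by
  set u := √(√K)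
  have hu : 0 < u := sqrt_pos.mpr (sqrt_pos.mpr (by linarith))
  have hlogK : log K = 4 * log u := by
    rw [log_sqrt (sqrt_nonneg K), log_sqrt (by linarith)]; ring
  have hLu : L ≤ u := by
    rw [le_sqrt hL.le (sqrt_nonneg K), le_sqrt (by positivity) (by linarith)]; linarith
  have huK : u ≤ √K / L := by
    rw [le_div_iff₀ hL, ← mul_self_sqrt (sqrt_nonneg K)]
    exact mul_le_mul_of_nonneg_left hLu hu.le
  calc log (K + 1) ≤ log (2 * K) := log_le_log (by linarith) (by linarith)
    _ = log 2 + 4 * log u := by rw [log_mul two_ne_zero (by linarith), hlogK]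
    _ ≤ 1 + 4 * (u - 1) := by
        gcongr
        · linarith [log_two_lt_d9]
        · exact log_le_sub_one_of_pos hu
    _ ≤ 4 * (√K / L) := by linarith

theorem Real.mul_add_one_mul_exp_neg_le_one_div_sq {x K : ℝ} (hx : 0 < x) (hL : 0 < log x)
    (hK : 1 ≤ K) (h : log x ^ 4 ≤ K) :
    x * ((K + 1) * exp (-(7 * (√K / log x)))) ≤ 1 / x ^ 2 := by
  have hLs := le_sqrt_div_of_pow_four_le hL h
  have hlog := log_add_one_le_of_pow_four_le hK hL h
  calc x * ((K + 1) * exp (-(7 * (√K / log x))))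
      = exp (log x + log (K + 1) - 7 * (√K / log x)) := by
        rw [sub_eq_add_neg, exp_add, exp_add, exp_log hx, exp_log (by linarith)]; ring
    _ ≤ exp (-(2 * log x)) := exp_le_exp.mpr (by linarith)
    _ = 1 / x ^ 2 := by
        rw [exp_neg, ← log_rpow hx, exp_log (by positivity), one_div]; norm_cast

theorem Real.exp_one_mul_le_of_mul_sqrt_mul_le {K q L lam c : ℝ} (hK : 0 ≤ K) (hL : 0 < L)
    (h : q * √K * L ≤ lam * exp (-(c + 1))) : exp 1 * K * q ≤ exp (-c) * (lam * √K / L) := by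
  rw [mul_div_assoc', le_div_iff₀ hL]
  calc exp 1 * K * q * L = exp 1 * √K * (q * √K * L) := by
        rw [show exp 1 * √K * (q * √K * L) = exp 1 * (√K * √K) * q * L by ring, mul_self_sqrt hK]
    _ ≤ exp 1 * √K * (lam * exp (-(c + 1))) := by gcongr
    _ = exp (-c) * (lam * √K) := by
        rw [show -c = 1 + -(c + 1) by ring, exp_add]; ring

/-- If `T_n ∼ Binomial(k'_n, q_n)` with `q_n √(k'_n) ln n → 0` and `k'_n/(ln n)⁴ → ∞`, then
for every `λ > 0` the series `∑ n · P(ln(n) T_n/√(k'_n) > λ)` converges. -/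
theorem binomial_tail_summable (k : ℕ → ℕ) (hk : ∀ n, 0 < k n)
    (q : ℕ → ℝ) (hq0 : ∀ n, 0 ≤ q n) (hq1 : ∀ n, q n ≤ 1)
    (h1 : Tendsto (fun n => q n * Real.sqrt (k n) * Real.log n) atTop (𝓝 0))
    (h2 : Tendsto (fun n => (k n : ℝ) / (Real.log n) ^ 4) atTop atTop)
    (lam : ℝ) (hlam : 0 < lam) :
    Summable (fun (n : ℕ) => (n : ℝ) *
      (((PMF.binomial (Real.toNNReal (q n)) (Real.toNNReal_le_one.mpr (hq1 n)) (k n)).toMeasure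
        {t : Fin (k n + 1) | lam < Real.log n * (t : ℝ) / Real.sqrt (k n)}).toReal)) := by
  have hsmall : ∀ᶠ n in atTop, q n * √(k n) * log n ≤ lam * exp (-(7 / lam + 1)) :=
    h1.eventually (ge_mem_nhds (by positivity))
  have hlarge : ∀ᶠ n in atTop, 1 ≤ (k n : ℝ) / log n ^ 4 := h2.eventually_ge_atTop 1
  have hlog : ∀ᶠ n : ℕ in atTop, 0 < log n :=
    (tendsto_log_atTop.comp tendsto_natCast_atTop_atTop).eventually_gt_atTop 0
  refine (summable_one_div_nat_pow.mpr one_lt_two).of_norm_bounded_eventually_nat ?_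
  filter_upwards [hsmall, hlarge, hlog, eventually_gt_atTop 0] with n hqn hkn hL hn
  replace hn : (0 : ℝ) < n := Nat.cast_pos.mpr hn
  have hK : 1 ≤ (k n : ℝ) := by exact_mod_cast hk n
  have hμ : 0 < lam * √(k n) / log n := by positivity
  have hevent : ∀ t ∈ {t : Fin (k n + 1) | lam < log n * (t : ℝ) / √(k n)},
      lam * √(k n) / log n < t := fun t ht => by
    rw [div_lt_iff₀ hL, mul_comm (t : ℝ)]
    exact (lt_div_iff₀ (by positivity)).mp ht
  have hratio := exp_one_mul_le_of_mul_sqrt_mul_le (k n).cast_nonneg hL hqn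
  rw [← Real.coe_toNNReal _ (hq0 n)] at hratio
  have htail := PMF.binomial_tail_le _ (Real.toNNReal_le_one.mpr (hq1 n)) (k n) hμ (by positivity)
    hevent hratio
  rw [Real.norm_of_nonneg (by positivity)]
  calc _ ≤ (n : ℝ) * ((k n + 1) * exp (-(7 / lam * (lam * √(k n) / log n)))) :=
        mul_le_mul_of_nonneg_left htail hn.le
    _ = n * ((k n + 1) * exp (-(7 * (√(k n) / log n)))) := by field_simp
    _ ≤ 1 / n ^ 2 := mul_add_one_mul_exp_neg_le_one_div_sq hn hL hK
        (by rwa [le_div_iff₀ (by positivity), one_mul] at hkn)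
end

section
/- Let X_1,…,X_n be i.i.d. from a distribution on a compact d'-dimensional C² manifold M ⊂ ℝ^d with C² boundary ∂M ≠ ∅, with density f satisfying 0 < f₀ ≤ f. Then there exists a constant c > 0 such that, almost surely, for all n large enough there exists a sample point X_i with dist(X_i, ∂M) ≤ c·ln(n)/n. -/
open MeasureTheory Metric Set Filter
open scoped ENNReal NNReal Topology RealInnerProductSpace

noncomputable section

/-- Euclidean space `ℝ^d`. -/
abbrev Euc (d : ℕ) := EuclideanSpace ℝ (Fin d)

/-- A compact `d'`-dimensional `C²` embedded submanifold with `C²` boundary in `ℝ^d`,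
encoded via local `C²` parametrizations defined on (open subsets of) the half-space
`Euc (d'-1) × [0,∞)`, which are immersions and homeomorphisms onto relatively open
subsets of the carrier, the boundary corresponding to the face `Euc (d'-1) × {0}`. -/
structure C2SubmanifoldB (d d' : ℕ) where
  carrier : Set (Euc d)
  bdry : Set (Euc d)
  bdry_subset : bdry ⊆ carrier
  isCompact : IsCompact carrier
  bdry_isCompact : IsCompact bdry
  nonempty : carrier.Nonempty
  chart : Euc d → (Euc (d' - 1) × ℝ) → Euc d
  chartDom : Euc d → Set (Euc (d' - 1) × ℝ)
  chartNbhd : Euc d → Set (Euc d)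
  dom_open : ∀ x ∈ carrier, IsOpen (chartDom x)
  chart_smooth : ∀ x ∈ carrier, ContDiff ℝ 2 (chart x)
  chart_injOn : ∀ x ∈ carrier, Set.InjOn (chart x) (chartDom x)
  nbhd_open : ∀ x ∈ carrier, IsOpen (chartNbhd x)
  nbhd_mem : ∀ x ∈ carrier, x ∈ chartNbhd x
  chart_mem : ∀ x ∈ carrier, ∃ y ∈ chartDom x, 0 ≤ y.2 ∧ chart x y = x
  chart_image : ∀ x ∈ carrier,
    chart x '' (chartDom x ∩ {y | 0 ≤ y.2}) = carrier ∩ chartNbhd x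
  chart_image_bdry : ∀ x ∈ carrier,
    chart x '' (chartDom x ∩ {y | y.2 = 0}) = bdry ∩ chartNbhd x
  chart_center_bdry : ∀ x ∈ bdry, (0 : Euc (d' - 1) × ℝ) ∈ chartDom x ∧ chart x 0 = x
  chart_immersion : ∀ x ∈ carrier, ∀ u ∈ chartDom x,
    Function.Injective (fderiv ℝ (chart x) u)

namespace C2SubmanifoldB

variable {d d' : ℕ}

/-- The tangent space of `M` at a boundary point `x`. -/
def tangent (M : C2SubmanifoldB d d') (x : Euc d) : Submodule ℝ (Euc d) :=
  LinearMap.range ((fderiv ℝ (M.chart x) 0) : (Euc (d' - 1) × ℝ) →ₗ[ℝ] Euc d)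

/-- The tangent space of `∂M` at a boundary point `x`. -/
def bdryTangent (M : C2SubmanifoldB d d') (x : Euc d) : Submodule ℝ (Euc d) :=
  Submodule.map ((fderiv ℝ (M.chart x) 0) : (Euc (d' - 1) × ℝ) →ₗ[ℝ] Euc d)
    (LinearMap.ker (LinearMap.snd ℝ (Euc (d' - 1)) ℝ))

/-- Orthogonal projection of `ℝ^d` onto the affine tangent plane `x + T_x M`. -/
def proj (M : C2SubmanifoldB d d') (x z : Euc d) : Euc d :=
  x + ((M.tangent x).orthogonalProjectionOnto (z - x) : Euc d)

end C2SubmanifoldB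

/-!
Near a boundary point, a chart `φ` of `M` has injective derivative, so it is bi-Lipschitz on a
small ball of the half-space model. It therefore maps the box `B(0, ρ) × (0, s]`, whose
Lebesgue measure is proportional to `s`, into the points of `M` within distance `L s` of `∂M`,
and the `d'`-dimensional Hausdorff measure of the image is still `≥ K^{-d'}` times that of the box.
With `f ≥ f₀` this gives `ν {dist(·, ∂M) ≤ r} ≥ κ r` for small `r`. For
`r_n = 2 log n / (κ n)` the probability that none of `X_0, …, X_{n-1}` lies within `r_n` of
`∂M` is `(1 - κ r_n)^n ≤ exp(-2 log n) = n⁻²`, which is summable, so Borel–Cantelli applies.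
-/

theorem HasStrictFDerivAt.exists_antilipschitzWith_domRestrict {𝕜 E F : Type*}
    [NontriviallyNormedField 𝕜] [CompleteSpace 𝕜] [NormedAddCommGroup E] [NormedSpace 𝕜 E]
    [FiniteDimensional 𝕜 E] [NormedAddCommGroup F] [NormedSpace 𝕜 F] {f : E → F}
    {f' : E →L[𝕜] F} {a : E} (hf : HasStrictFDerivAt f f' a) (hf' : Function.Injective f') :
    ∃ K > 0, ∃ s ∈ 𝓝 a, AntilipschitzWith K (s.domRestrict f) := by
  obtain ⟨K, hK, hf'K⟩ :=
    (f' : E →ₗ[𝕜] F).exists_antilipschitzWith (LinearMap.ker_eq_bot.mpr hf')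
  obtain ⟨s, hs, hfs⟩ := hf.approximates_deriv_on_nhds (c := K⁻¹ / 2) (Or.inr (by positivity))
  refine ⟨_, ?_, s, hs, (hf'K.domRestrict s).add_sub_lipschitzWith hfs.lipschitz_sub
    (half_lt_self (by positivity))⟩
  simpa using hK

theorem ContDiffAt.exists_ball_lipschitzOnWith_antilipschitzWith {𝕜 E F : Type*} [RCLike 𝕜]
    [NormedAddCommGroup E] [NormedSpace 𝕜 E] [FiniteDimensional 𝕜 E] [NormedAddCommGroup F]
    [NormedSpace 𝕜 F] {f : E → F} {a : E} (hf : ContDiffAt 𝕜 1 f a)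
    (hf' : Function.Injective (fderiv 𝕜 f a)) {U : Set E} (hU : U ∈ 𝓝 a) :
    ∃ ρ > 0, ball a ρ ⊆ U ∧ ∃ L K : ℝ≥0, 0 < K ∧ LipschitzOnWith L f (ball a ρ) ∧
      AntilipschitzWith K ((ball a ρ).domRestrict f) := by
  obtain ⟨K, hK, s, hs, hfs⟩ :=
    (hf.hasStrictFDerivAt one_ne_zero).exists_antilipschitzWith_domRestrict hf'
  obtain ⟨L, t, ht, hft⟩ := hf.exists_lipschitzOnWith
  obtain ⟨ρ, hρ, hball⟩ := Metric.mem_nhds_iff.mp (inter_mem (inter_mem hU hs) ht)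
  exact ⟨ρ, hρ, fun x hx => (hball hx).1.1, L, K, hK, hft.mono fun x hx => (hball hx).2,
    fun x y => hfs ⟨x, (hball x.2).1.2⟩ ⟨y, (hball y.2).1.2⟩⟩

theorem AntilipschitzWith.le_hausdorffMeasure_image_of_subset {X Y : Type*} [EMetricSpace X]
    [MeasurableSpace X] [BorelSpace X] [EMetricSpace Y] [MeasurableSpace Y] [BorelSpace Y]
    {K : ℝ≥0} {f : X → Y} {s t : Set X} (hf : AntilipschitzWith K (s.domRestrict f))
    {d : ℝ} (hd : 0 ≤ d) (ht : t ⊆ s) :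
    μH[d] t ≤ (K : ℝ≥0∞) ^ d * μH[d] (f '' t) := by
  have h := hf.le_hausdorffMeasure_image hd (Subtype.val ⁻¹' t : Set s)
  rwa [← isometry_subtype_coe.hausdorffMeasure_image (Or.inl hd), Set.domRestrict_eq,
    image_comp, Subtype.image_preimage_coe, inter_eq_right.mpr ht] at h

namespace MeasureTheory

theorem Measure.exists_measure_ball_prod_Ioc_eq {F : Type*} [NormedAddCommGroup F]
    [NormedSpace ℝ F] [FiniteDimensional ℝ F] [MeasurableSpace F] [BorelSpace F]
    (μ : Measure (F × ℝ)) [μ.IsAddHaarMeasure] {ρ : ℝ} (hρ : 0 < ρ) :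
    ∃ κ > 0, ∀ r, μ (ball 0 ρ ×ˢ Ioc 0 r) = ENNReal.ofReal (κ * r) := by
  set ν : Measure (F × ℝ) := Measure.addHaar.prod volume
  set m := μ.addHaarScalarFactor ν * Measure.addHaar (ball (0 : F) ρ)
  have hm : m ≠ 0 := mul_ne_zero
    (by simpa using (μ.addHaarScalarFactor_pos_of_isAddHaarMeasure ν).ne')
    (measure_ball_pos _ _ hρ).ne'
  have hm' : m ≠ ∞ := ENNReal.mul_ne_top ENNReal.coe_ne_top measure_ball_lt_top.ne
  refine ⟨m.toReal, ENNReal.toReal_pos hm hm', fun r => ?_⟩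
  rw [μ.isAddLeftInvariant_eq_smul ν, Measure.smul_apply, Measure.prod_prod, Real.volume_Ioc,
    ENNReal.ofReal_mul ENNReal.toReal_nonneg, ENNReal.ofReal_toReal hm', sub_zero,
    ENNReal.smul_def, smul_eq_mul, ← mul_assoc]

theorem ofReal_mul_measure_inter_le_withDensity {α : Type*} [MeasurableSpace α]
    {μ : Measure α} {s t : Set α} (hs : MeasurableSet s) (ht : MeasurableSet t) {f : α → ℝ}
    {f₀ : ℝ} (hf : ∀ x ∈ s, f₀ ≤ f x) :
    ENNReal.ofReal f₀ * μ (s ∩ t) ≤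
      (μ.restrict s).withDensity (fun x => ENNReal.ofReal (f x)) t := by
  rw [withDensity_apply _ ht, Measure.restrict_restrict ht, inter_comm t, ← setLIntegral_const]
  exact setLIntegral_mono' (hs.inter ht) fun x hx => ENNReal.ofReal_le_ofReal (hf x hx.1)

theorem ae_eventually_notMem_of_eventually_le {Ω : Type*} [MeasurableSpace Ω]
    {μ : Measure Ω} {s : ℕ → Set Ω} {b : ℕ → ℝ≥0∞} (hb : ∑' n, b n ≠ ∞)
    (hsb : ∀ᶠ n in atTop, μ (s n) ≤ b n) : ∀ᵐ ω ∂μ, ∀ᶠ n in atTop, ω ∉ s n := by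
  obtain ⟨N, hN⟩ := eventually_atTop.mp hsb
  set s' : ℕ → Set Ω := fun n => if N ≤ n then s n else ∅
  have hs' : ∑' n, μ (s' n) ≠ ∞ := ne_top_of_le_ne_top hb <| ENNReal.tsum_le_tsum fun n => by
    by_cases hn : N ≤ n <;> simp [s', hn, hN]
  filter_upwards [ae_eventually_notMem hs'] with ω hω
  filter_upwards [hω, eventually_ge_atTop N] with n hn hNn
  simpa [s', hNn] using hn

end MeasureTheory

theorem ENNReal.one_sub_pow_le_exp_neg {n : ℕ} {t : ℝ} (ht : 0 ≤ t) (htn : t ≤ n)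
    {p : ℝ≥0∞} (hp : ENNReal.ofReal (t / n) ≤ p) :
    (1 - p) ^ n ≤ ENNReal.ofReal (Real.exp (-t)) := by
  have htn' : t / n ≤ 1 := div_le_one_of_le₀ htn n.cast_nonneg
  calc (1 - p) ^ n ≤ (1 - ENNReal.ofReal (t / n)) ^ n := by gcongr
    _ = ENNReal.ofReal ((1 - t / n) ^ n) := by
      rw [← ENNReal.ofReal_one, ← ENNReal.ofReal_sub _ (by positivity),
        ENNReal.ofReal_pow (by linarith)]
    _ ≤ ENNReal.ofReal (Real.exp (-t)) :=
      ENNReal.ofReal_le_ofReal (Real.one_sub_div_pow_le_exp_neg htn)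

namespace C2SubmanifoldB

variable {d d' : ℕ} (M : C2SubmanifoldB d d')

theorem chart_mem_carrier {x : Euc d} (hx : x ∈ M.carrier) {u : Euc (d' - 1) × ℝ}
    (hu : u ∈ M.chartDom x) (hu₂ : 0 ≤ u.2) : M.chart x u ∈ M.carrier :=
  (M.chart_image x hx ▸ mem_image_of_mem (M.chart x) ⟨hu, hu₂⟩ :
    M.chart x u ∈ M.carrier ∩ M.chartNbhd x).1

theorem chart_mem_bdry {x : Euc d} (hx : x ∈ M.carrier) {u : Euc (d' - 1) × ℝ}
    (hu : u ∈ M.chartDom x) (hu₂ : u.2 = 0) : M.chart x u ∈ M.bdry :=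
  (M.chart_image_bdry x hx ▸ mem_image_of_mem (M.chart x) ⟨hu, hu₂⟩ :
    M.chart x u ∈ M.bdry ∩ M.chartNbhd x).1

theorem infDist_chart_le {x : Euc d} (hx : x ∈ M.carrier) {L : ℝ≥0}
    {t : Set (Euc (d' - 1) × ℝ)} (hL : LipschitzOnWith L (M.chart x) t)
    {u : Euc (d' - 1) × ℝ} (hu : u ∈ t) (hu₀ : (u.1, 0) ∈ t ∩ M.chartDom x) :
    infDist (M.chart x u) M.bdry ≤ L * |u.2| :=
  calc infDist (M.chart x u) M.bdry ≤ dist (M.chart x u) (M.chart x (u.1, 0)) :=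
        infDist_le_dist_of_mem (M.chart_mem_bdry hx hu₀.2 rfl)
    _ ≤ L * dist u (u.1, 0) := hL.dist_le_mul _ hu _ hu₀.1
    _ = L * |u.2| := by simp [Prod.dist_eq]

theorem exists_measure_collar_mul_ge (hd'1 : 1 ≤ d') (hbdry : M.bdry.Nonempty) :
    ∃ ρ > 0, ∃ L > 0, ∃ κ > 0, ∀ s : ℝ, 0 < s → s < ρ →
      ENNReal.ofReal (κ * s) ≤ μH[d'] (M.carrier ∩ {z | infDist z M.bdry ≤ L * s}) := by
  obtain ⟨x₀, hx₀⟩ := hbdry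
  have hx₀M := M.bdry_subset hx₀
  obtain ⟨h0, -⟩ := M.chart_center_bdry x₀ hx₀
  have hC1 : ContDiffAt ℝ 1 (M.chart x₀) 0 :=
    (M.chart_smooth x₀ hx₀M).contDiffAt.of_le one_le_two
  obtain ⟨ρ, hρ, hρU, L, K, hK, hL, hK'⟩ := hC1.exists_ball_lipschitzOnWith_antilipschitzWith
    (M.chart_immersion x₀ hx₀M 0 h0) ((M.dom_open x₀ hx₀M).mem_nhds h0)
  have hdim : (d' : ℝ) = Module.finrank ℝ (Euc (d' - 1) × ℝ) := by simp [hd'1]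
  have : (μH[(d' : ℝ)] : Measure (Euc (d' - 1) × ℝ)).IsAddHaarMeasure := by
    rw [hdim]; infer_instance
  obtain ⟨κ, hκ, hbox⟩ :=
    Measure.exists_measure_ball_prod_Ioc_eq (μH[(d' : ℝ)] : Measure (Euc (d' - 1) × ℝ)) hρ
  have hKd : (0 : ℝ) < K ^ d' := by positivity
  refine ⟨ρ, hρ, L + 1, by positivity, κ / K ^ d', by positivity, fun s hs hsρ => ?_⟩
  have hbox_sub : ball 0 ρ ×ˢ Ioc 0 s ⊆ ball (0 : Euc (d' - 1) × ℝ) ρ := by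
    rw [← Prod.mk_zero_zero, ← ball_prod_same, Real.ball_eq_Ioo]
    exact prod_mono_right (Ioc_subset_Ioo (by linarith) (by linarith))
  have himage : M.chart x₀ '' (ball 0 ρ ×ˢ Ioc 0 s) ⊆
      M.carrier ∩ {z | infDist z M.bdry ≤ (L + 1) * s} := by
    rintro _ ⟨u, ⟨hu₁, hu₂⟩, rfl⟩
    have hu := hbox_sub ⟨hu₁, hu₂⟩
    have hu₀ : (u.1, (0 : ℝ)) ∈ ball (0 : Euc (d' - 1) × ℝ) ρ := by
      rw [← ball_prod_same]; exact ⟨hu₁, mem_ball_self hρ⟩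
    refine ⟨M.chart_mem_carrier hx₀M (hρU hu) hu₂.1.le,
      (M.infDist_chart_le hx₀M hL hu ⟨hu₀, hρU hu₀⟩).trans ?_⟩
    rw [abs_of_pos hu₂.1]
    exact mul_le_mul (by simp) hu₂.2 hu₂.1.le (by positivity)
  have hmeas : ENNReal.ofReal (κ * s) ≤ (K : ℝ≥0∞) ^ (d' : ℝ) *
      μH[d'] (M.carrier ∩ {z | infDist z M.bdry ≤ (L + 1) * s}) := by
    rw [← hbox]
    calc _ ≤ _ := hK'.le_hausdorffMeasure_image_of_subset (Nat.cast_nonneg _) hbox_sub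
      _ ≤ _ := by gcongr
  rw [ENNReal.rpow_natCast, ← ENNReal.ofReal_coe_nnreal, ← ENNReal.ofReal_pow K.coe_nonneg]
    at hmeas
  rw [← ENNReal.mul_le_mul_iff_right (ENNReal.ofReal_pos.mpr hKd).ne' ENNReal.ofReal_ne_top,
    ← ENNReal.ofReal_mul hKd.le]
  convert hmeas using 2
  field_simp

theorem exists_measure_collar_ge (hd'1 : 1 ≤ d') (hbdry : M.bdry.Nonempty) :
    ∃ r₀ > 0, ∃ κ > 0, ∀ r : ℝ, 0 < r → r ≤ r₀ →
      ENNReal.ofReal (κ * r) ≤ μH[d'] (M.carrier ∩ {z | infDist z M.bdry ≤ r}) := by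
  obtain ⟨ρ, hρ, L, hL, κ, hκ, hcollar⟩ := M.exists_measure_collar_mul_ge hd'1 hbdry
  refine ⟨L * ρ / 2, by positivity, κ / L, by positivity, fun r hr hrr => ?_⟩
  have h := hcollar (r / L) (by positivity) (by rw [div_lt_iff₀ hL]; linarith)
  rwa [mul_div_cancel₀ _ hL.ne', ← mul_div_assoc, mul_div_right_comm] at h

end C2SubmanifoldB

namespace ProbabilityTheory

variable {Ω α : Type*} [MeasurableSpace Ω] [MeasurableSpace α] {P : Measure Ω}
  [IsProbabilityMeasure P] {ν : Measure α} {X : ℕ → Ω → α}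

theorem iIndepFun.measure_forall_lt_notMem (hmeas : ∀ i, Measurable (X i))
    (hindep : iIndepFun X P) (hlaw : ∀ i, P.map (X i) = ν) {C : Set α} (hC : MeasurableSet C)
    (n : ℕ) : P {ω | ∀ i < n, X i ω ∉ C} = (1 - ν C) ^ n := by
  have hset : {ω | ∀ i < n, X i ω ∉ C} = ⋂ i ∈ Finset.range n, X i ⁻¹' Cᶜ := by
    ext; simp
  have hterm : ∀ i, P (X i ⁻¹' Cᶜ) = 1 - ν C := fun i => by
    rw [preimage_compl, prob_compl_eq_one_sub (hmeas i hC), ← Measure.map_apply (hmeas i) hC,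
      hlaw i]
  rw [hset, hindep.meas_biInter fun i _ => ⟨_, hC.compl, rfl⟩,
    Finset.prod_congr rfl fun i _ => hterm i, Finset.prod_const, Finset.card_range]

theorem iIndepFun.ae_eventually_exists_le_mul_log_div (hmeas : ∀ i, Measurable (X i))
    (hindep : iIndepFun X P) (hlaw : ∀ i, P.map (X i) = ν) {g : α → ℝ} (hg : Measurable g)
    {r₀ κ : ℝ} (hr₀ : 0 < r₀) (hκ : 0 < κ)
    (hν : ∀ r, 0 < r → r ≤ r₀ → ENNReal.ofReal (κ * r) ≤ ν {z | g z ≤ r}) :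
    ∀ᵐ ω ∂P, ∀ᶠ n : ℕ in atTop, ∃ i < n, g (X i ω) ≤ 2 / κ * Real.log n / n := by
  set A : ℕ → Set Ω := fun n => {ω | ∀ i < n, X i ω ∉ {z | g z ≤ 2 / κ * Real.log n / n}}
  have htend : Tendsto (fun n : ℕ => 2 * Real.log n / n) atTop (𝓝 0) := by
    simpa [mul_div_assoc] using ((Real.isLittleO_log_id_atTop.tendsto_div_nhds_zero).comp
      tendsto_natCast_atTop_atTop).const_mul 2
  have hsmall : ∀ᶠ n : ℕ in atTop, 2 ≤ n ∧ 2 * Real.log n / n ≤ min 1 (κ * r₀) :=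
    (eventually_ge_atTop 2).and (htend.eventually (eventually_le_nhds (by positivity)))
  have hbound : ∀ᶠ n : ℕ in atTop, P (A n) ≤ ENNReal.ofReal (1 / n ^ 2) := by
    filter_upwards [hsmall] with n ⟨hn2, hq⟩
    have hn : (0 : ℝ) < n := by positivity
    have hlog : 0 < Real.log n := Real.log_pos (by exact_mod_cast hn2)
    have hκr : κ * (2 / κ * Real.log n / n) = 2 * Real.log n / n := by field_simp
    have hr : 2 / κ * Real.log n / n ≤ r₀ :=
      le_of_mul_le_mul_left (hκr ▸ hq.trans (min_le_right _ _)) hκ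
    rw [hindep.measure_forall_lt_notMem hmeas hlaw (measurableSet_le hg measurable_const)]
    calc _ ≤ ENNReal.ofReal (Real.exp (-(2 * Real.log n))) :=
          ENNReal.one_sub_pow_le_exp_neg (by positivity)
            ((div_le_one hn).mp (hq.trans (min_le_left _ _))) (hκr ▸ hν _ (by positivity) hr)
      _ = ENNReal.ofReal (1 / n ^ 2) := by
          rw [Real.exp_neg, mul_comm, Real.exp_mul, Real.exp_log hn, Real.rpow_two, one_div]
  have hsum : Summable fun n : ℕ => 1 / (n : ℝ) ^ 2 :=
    Real.summable_one_div_nat_pow.mpr one_lt_two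
  filter_upwards [ae_eventually_notMem_of_eventually_le hsum.tsum_ofReal_ne_top hbound]
    with ω hω
  filter_upwards [hω] with n hn
  simpa [A] using hn

end ProbabilityTheory

theorem exists_sample_point_near_boundary_general {d d' : ℕ} (hd'1 : 1 ≤ d')
    (M : C2SubmanifoldB d d') (hbdry : M.bdry.Nonempty)
    (f : Euc d → ℝ) (f₀ : ℝ) (hf₀ : 0 < f₀)
    (hlow : ∀ x ∈ M.carrier, f₀ ≤ f x)
    (ν : Measure (Euc d))
    (hν : ν = ((μH[(d' : ℝ)]).restrict M.carrier).withDensity fun x => ENNReal.ofReal (f x))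
    {Ω : Type*} [MeasurableSpace Ω] (P : Measure Ω) [IsProbabilityMeasure P]
    (X : ℕ → Ω → Euc d) (hmeas : ∀ i, Measurable (X i))
    (hindep : ProbabilityTheory.iIndepFun X P)
    (hlaw : ∀ i, Measure.map (X i) P = ν) :
    ∃ c > 0, ∀ᵐ ω ∂P, ∀ᶠ n : ℕ in atTop,
      ∃ i < n, Metric.infDist (X i ω) M.bdry ≤ c * Real.log n / n := by
  obtain ⟨r₀, hr₀, κ, hκ, hcollar⟩ := M.exists_measure_collar_ge hd'1 hbdry
  have hcollar_meas : ∀ r : ℝ, MeasurableSet {z | infDist z M.bdry ≤ r} := fun r =>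
    measurableSet_le (continuous_infDist_pt _).measurable measurable_const
  refine ⟨2 / (f₀ * κ), by positivity, hindep.ae_eventually_exists_le_mul_log_div hmeas hlaw
    (continuous_infDist_pt _).measurable hr₀ (mul_pos hf₀ hκ) fun r hr hrr => ?_⟩
  calc ENNReal.ofReal (f₀ * κ * r) = ENNReal.ofReal f₀ * ENNReal.ofReal (κ * r) := by
        rw [mul_assoc, ENNReal.ofReal_mul hf₀.le]
    _ ≤ ENNReal.ofReal f₀ * μH[d'] (M.carrier ∩ {z | infDist z M.bdry ≤ r}) := by
        gcongr; exact hcollar r hr hrr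
    _ ≤ ν {z | infDist z M.bdry ≤ r} := hν ▸ ofReal_mul_measure_inter_le_withDensity
        M.isCompact.isClosed.measurableSet (hcollar_meas r) hlow

/-- For an i.i.d. sample on a compact `C²` manifold with nonempty `C²` boundary and density
`f ≥ f₀ > 0`, there is `c > 0` such that almost surely, for all large `n`, some sample point
among the first `n` is within distance `c ln(n)/n` of the boundary. -/
theorem exists_sample_point_near_boundary {d d' : ℕ} (hd'1 : 1 ≤ d') (hd' : d' ≤ d)
    (M : C2SubmanifoldB d d') (hbdry : M.bdry.Nonempty)
    (f : Euc d → ℝ) (f₀ : ℝ) (hf₀ : 0 < f₀)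
    (hlow : ∀ x ∈ M.carrier, f₀ ≤ f x)
    (ν : Measure (Euc d))
    (hν : ν = ((μH[(d' : ℝ)]).restrict M.carrier).withDensity fun x => ENNReal.ofReal (f x))
    (hprob : IsProbabilityMeasure ν)
    {Ω : Type*} [MeasurableSpace Ω] (P : Measure Ω) [IsProbabilityMeasure P]
    (X : ℕ → Ω → Euc d) (hmeas : ∀ i, Measurable (X i))
    (hindep : ProbabilityTheory.iIndepFun X P)
    (hlaw : ∀ i, Measure.map (X i) P = ν) :
    ∃ c > 0, ∀ᵐ ω ∂P, ∀ᶠ n : ℕ in atTop,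
      ∃ i < n, Metric.infDist (X i ω) M.bdry ≤ c * Real.log n / n :=
  exists_sample_point_near_boundary_general hd'1 M hbdry f f₀ hf₀ hlow ν hν P X hmeas hindep hlaw
end
end
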